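/- If Δ is a separating triangle in a plane near-triangulation G, with Int(Δ) and Ext(Δ) the vertex sets interior and exterior to Δ, then G is perfect if and only if the subgraphs induced by Int(Δ) ∪ V(Δ) and Ext(Δ) ∪ V(Δ) are both perfect. -/

import Mathlib

/-!
A separating triangle is a clique cutset: every vertex lies on it, inside or outside it, and no
edge joins an inside vertex to an outside one, since that edge would be a segment missing the
triangle and joining a bounded to an unbounded component of its complement. Perfectness passes to
induced subgraphs; conversely, for any induced subgraph, `ω`-colourings of its two sides glue
along the clique once the colours of one side are permuted to agree on it, so `χ ≤ ω`.
-/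

open scoped Classical

namespace PlanePerfect

variable {V : Type*}

/-- A straight-line plane embedding of a simple graph. -/
structure PlaneEmbedding (G : SimpleGraph V) where
  pos : V → ℝ × ℝ
  inj : Function.Injective pos
  edges_disjoint : ∀ ⦃u v x y : V⦄, G.Adj u v → G.Adj x y →
    ∀ p : ℝ × ℝ, p ∈ openSegment ℝ (pos u) (pos v) →
      p ∈ openSegment ℝ (pos x) (pos y) → s(u, v) = s(x, y)
  vertex_not_on_edge : ∀ ⦃u v w : V⦄, G.Adj u v →
    pos w ∉ openSegment ℝ (pos u) (pos v)

/-- The drawing (point set) of the induced subgraph on `W`. -/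
def drawing {G : SimpleGraph V} (E : PlaneEmbedding G) (W : Set V) : Set (ℝ × ℝ) :=
  (E.pos '' W) ∪ ⋃ (u ∈ W), ⋃ (v ∈ W), ⋃ (_ : G.Adj u v), segment ℝ (E.pos u) (E.pos v)

/-- The exterior (unbounded) region of the drawing of `G[W]`. -/
def outerRegion {G : SimpleGraph V} (E : PlaneEmbedding G) (W : Set V) : Set (ℝ × ℝ) :=
  {p | p ∉ drawing E W ∧
    ¬ Bornology.IsBounded (connectedComponentIn (drawing E W)ᶜ p)}

/-- Vertices of `W` on the boundary of the exterior face of `G[W]`. -/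
def extBoundary {G : SimpleGraph V} (E : PlaneEmbedding G) (W : Set V) : Set V :=
  {v ∈ W | E.pos v ∈ closure (outerRegion E W)}

/-- Vertices drawn in the interior (bounded) region of the drawing of `G[W]`. -/
def intVerts {G : SimpleGraph V} (E : PlaneEmbedding G) (W : Set V) : Set V :=
  {v | v ∉ W ∧ E.pos v ∉ drawing E W ∧
    Bornology.IsBounded (connectedComponentIn (drawing E W)ᶜ (E.pos v))}

/-- Vertices drawn in the exterior (unbounded) region of the drawing of `G[W]`. -/
def extVerts {G : SimpleGraph V} (E : PlaneEmbedding G) (W : Set V) : Set V :=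
  {v | v ∉ W ∧ E.pos v ∉ drawing E W ∧
    ¬ Bornology.IsBounded (connectedComponentIn (drawing E W)ᶜ (E.pos v))}

/-- The plane graph `G[W]` is a near-triangulation: every bounded face is a triangle. -/
def NearTriOn {G : SimpleGraph V} (E : PlaneEmbedding G) (W : Set V) : Prop :=
  ∀ p : ℝ × ℝ, p ∉ drawing E W →
    Bornology.IsBounded (connectedComponentIn (drawing E W)ᶜ p) →
    ∃ x y z, x ∈ W ∧ y ∈ W ∧ z ∈ W ∧ G.Adj x y ∧ G.Adj y z ∧ G.Adj x z ∧
      frontier (connectedComponentIn (drawing E W)ᶜ p) = drawing E {x, y, z}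

/-- `xyz` is a facial triangle of the plane graph `G`. -/
def IsFacialTriangle {G : SimpleGraph V} (E : PlaneEmbedding G) (x y z : V) : Prop :=
  G.Adj x y ∧ G.Adj y z ∧ G.Adj x z ∧
  ∃ p, p ∉ drawing E Set.univ ∧
    frontier (connectedComponentIn (drawing E Set.univ)ᶜ p) = drawing E {x, y, z}

/-- `xyz` is a separating triangle of the plane graph `G[W]`. -/
def SepTriOn {G : SimpleGraph V} (E : PlaneEmbedding G) (W : Set V) (x y z : V) : Prop :=
  x ∈ W ∧ y ∈ W ∧ z ∈ W ∧ G.Adj x y ∧ G.Adj y z ∧ G.Adj x z ∧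
  (intVerts E {x, y, z} ∩ W).Nonempty ∧ (extVerts E {x, y, z} ∩ W).Nonempty

/-- `uv` is an edge separator of `G[W]`. -/
def EdgeSepOn (G : SimpleGraph V) (W : Set V) (u v : V) : Prop :=
  u ∈ W ∧ v ∈ W ∧ G.Adj u v ∧ ¬ (G.induce (W \ {u, v})).Connected

/-- `G[W]` is `2`-connected. -/
def TwoConnOn (G : SimpleGraph V) (W : Set V) : Prop :=
  3 ≤ W.ncard ∧ (G.induce W).Connected ∧ ∀ v ∈ W, (G.induce (W \ {v})).Connected

/-- `G[W]` is a W-triangulation: a `2`-connected plane near-triangulation with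
no edge separator and no separating triangle. -/
def WTriOn {G : SimpleGraph V} (E : PlaneEmbedding G) (W : Set V) : Prop :=
  TwoConnOn G W ∧ NearTriOn E W ∧ (∀ u v, ¬ EdgeSepOn G W u v) ∧
    ∀ x y z, ¬ SepTriOn E W x y z

/-- A W-component: a maximal vertex set inducing a W-triangulation. -/
def IsWComponent {G : SimpleGraph V} (E : PlaneEmbedding G) (W : Set V) : Prop :=
  WTriOn E W ∧ ∀ W', W ⊆ W' → WTriOn E W' → W' = W

/-- Vertex set of a closed walk. -/
def supportSet {G : SimpleGraph V} {u : V} (w : G.Walk u u) : Set V := {x | x ∈ w.support}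

/-- `C` is an odd hole of `G`: the vertex set of an induced cycle of odd length `≥ 5`. -/
def IsOddHole (G : SimpleGraph V) (C : Set V) : Prop :=
  ∃ (v : V) (w : G.Walk v v), w.IsCycle ∧ Odd w.length ∧ 5 ≤ w.length ∧
    (∀ x y, x ∈ w.support → y ∈ w.support → G.Adj x y → w.toSubgraph.Adj x y) ∧
    C = supportSet w

/-- `C` is a minimal odd hole: no other odd hole lies within `C ∪ Int(C)`. -/
def MinimalOddHole {G : SimpleGraph V} (E : PlaneEmbedding G) (C : Set V) : Prop :=
  IsOddHole G C ∧ ∀ C', IsOddHole G C' → C' ⊆ C ∪ intVerts E C → C' = C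

/-- A graph is perfect if every induced subgraph has chromatic number equal to
its clique number. -/
def IsPerfect (G : SimpleGraph V) : Prop :=
  ∀ S : Set V, (G.induce S).chromaticNumber = ((G.induce S).cliqueNum : ℕ∞)

/-- Closed neighbourhood of a set of vertices. -/
def closedNbhd (G : SimpleGraph V) (X : Set V) : Set V :=
  X ∪ {v | ∃ x ∈ X, G.Adj x v}

/-- Degree of a vertex, as the cardinality of its neighbour set. -/
noncomputable def deg (G : SimpleGraph V) (v : V) : ℕ := (G.neighborSet v).ncard

/-- `G` is an even W-triangulation (w.r.t. the embedding `E`): every internal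
vertex has even degree. -/
def EvenWTri {G : SimpleGraph V} (E : PlaneEmbedding G) : Prop :=
  WTriOn E Set.univ ∧ ∀ v, v ∉ extBoundary E Set.univ → Even (deg G v)


/-- The auxiliary graph `G'` on `S ∪ T`: edges of the odd hole `C` (= all `G`-edges
within `S`, since `C` is induced), edges of the boundary cycle `C'` (the cycle `w'`),
and all `G`-edges between `S` and `T`. -/
def auxGraph (G : SimpleGraph V) (S T : Set V) {b₀ : V} (w' : G.Walk b₀ b₀) :
    SimpleGraph V :=
  SimpleGraph.fromRel (fun u v =>
    (u ∈ S ∧ v ∈ S ∧ G.Adj u v) ∨ w'.toSubgraph.Adj u v ∨ (u ∈ S ∧ v ∈ T ∧ G.Adj u v))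

end PlanePerfect

open PlanePerfect

namespace SimpleGraph

variable {α β : Type*} {G : SimpleGraph α} {H : SimpleGraph β}

theorem Embedding.cliqueNum_le [Finite β] (f : G ↪g H) : G.cliqueNum ≤ H.cliqueNum := by
  obtain ⟨s, hs⟩ := G.exists_isNClique_cliqueNum
  have hclique : H.IsClique (s.map f.toEmbedding) := by
    rw [Finset.coe_map]
    rintro _ ⟨a, ha, rfl⟩ _ ⟨b, hb, rfl⟩ hne
    exact f.map_adj_iff.mpr (hs.isClique ha hb (ne_of_apply_ne _ hne))
  simpa [hs.card_eq] using hclique.card_le_cliqueNum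

theorem cliqueNum_congr [Finite α] [Finite β] (e : G ≃g H) : G.cliqueNum = H.cliqueNum :=
  le_antisymm e.toEmbedding.cliqueNum_le e.symm.toEmbedding.cliqueNum_le

def induceInduceIso (G : SimpleGraph α) {A T : Set α} (hT : T ⊆ A) :
    (G.induce A).induce (Subtype.val ⁻¹' T) ≃g G.induce T where
  toFun v := ⟨v.1.1, v.2⟩
  invFun v := ⟨⟨v.1, hT v.2⟩, v.2⟩
  left_inv _ := rfl
  right_inv _ := rfl
  map_rel_iff' := Iff.rfl

theorem Colorable.of_isClique_inter {A B : Set α} {n : ℕ} (hAB : A ∪ B = Set.univ)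
    (hK : G.IsClique (A ∩ B))
    (hedge : ∀ ⦃u v⦄, G.Adj u v → u ∈ A ∧ v ∈ A ∨ u ∈ B ∧ v ∈ B)
    (hA : (G.induce A).Colorable n) (hB : (G.induce B).Colorable n) : G.Colorable n := by
  obtain ⟨c₁⟩ := hA
  obtain ⟨c₂⟩ := hB
  let f : ↥(A ∩ B) → Fin n := fun k => c₂ ⟨k, k.2.2⟩
  let g : ↥(A ∩ B) → Fin n := fun k => c₁ ⟨k, k.2.1⟩
  have hf : Function.Injective f := fun k l hkl => by
    by_contra hne
    exact c₂.valid (show (G.induce B).Adj ⟨k, k.2.2⟩ ⟨l, l.2.2⟩ from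
      hK k.2 l.2 (hne ∘ Subtype.ext)) hkl
  have hg : Function.Injective g := fun k l hkl => by
    by_contra hne
    exact c₁.valid (show (G.induce A).Adj ⟨k, k.2.1⟩ ⟨l, l.2.1⟩ from
      hK k.2 l.2 (hne ∘ Subtype.ext)) hkl
  have : Finite ↥(A ∩ B) := Finite.of_injective f hf
  obtain ⟨σ, hσ⟩ := Equiv.Perm.exists_extending_pair f g hf hg
  have hB_of_notMem_A {v : α} (h : v ∉ A) : v ∈ B :=
    ((hAB ▸ Set.mem_univ v : v ∈ A ∪ B)).resolve_left h
  let c : α → Fin n := fun v =>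
    if h : v ∈ A then c₁ ⟨v, h⟩ else σ (c₂ ⟨v, hB_of_notMem_A h⟩)
  have hcA (v : α) (h : v ∈ A) : c v = c₁ ⟨v, h⟩ := dif_pos h
  have hcB (v : α) (hvB : v ∈ B) : c v = σ (c₂ ⟨v, hvB⟩) := by
    by_cases hvA : v ∈ A
    · rw [hcA v hvA]
      exact (hσ ⟨v, hvA, hvB⟩).symm
    · exact dif_neg hvA
  refine ⟨Coloring.mk c fun {u v} huv => ?_⟩
  rcases hedge huv with ⟨hu, hv⟩ | ⟨hu, hv⟩
  · rw [hcA u hu, hcA v hv]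
    exact c₁.valid huv
  · rw [hcB u hu, hcB v hv]
    exact σ.injective.ne (c₂.valid huv)

end SimpleGraph

namespace PlanePerfect

open SimpleGraph

section Perfect

variable {V : Type*} [Finite V] {G : SimpleGraph V}

theorem isPerfect_induce_iff {A : Set V} :
    IsPerfect (G.induce A) ↔
      ∀ T ⊆ A, (G.induce T).chromaticNumber = (G.induce T).cliqueNum := by
  refine ⟨fun h T hT => ?_, fun h S => ?_⟩
  · have e := G.induceInduceIso hT
    rw [← chromaticNumber_congr e, ← cliqueNum_congr e]
    exact h _
  · have hS : Subtype.val '' S ⊆ A := Subtype.coe_image_subset A S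
    rw [← Subtype.val_injective.preimage_image S, chromaticNumber_congr (G.induceInduceIso hS),
      cliqueNum_congr (G.induceInduceIso hS)]
    exact h _ hS

theorem isPerfect_iff_of_isClique_inter {A B : Set V} (hAB : A ∪ B = Set.univ)
    (hK : G.IsClique (A ∩ B))
    (hedge : ∀ ⦃u v⦄, G.Adj u v → u ∈ A ∧ v ∈ A ∨ u ∈ B ∧ v ∈ B) :
    IsPerfect G ↔ IsPerfect (G.induce A) ∧ IsPerfect (G.induce B) := by
  simp only [isPerfect_induce_iff]
  refine ⟨fun h => ⟨fun T _ => h T, fun T _ => h T⟩, fun ⟨hA, hB⟩ S => ?_⟩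
  set n := (G.induce S).cliqueNum
  have hside {C : Set V} (hC : ∀ T ⊆ C, (G.induce T).chromaticNumber = (G.induce T).cliqueNum) :
      ((G.induce S).induce (Subtype.val ⁻¹' C)).Colorable n := by
    have hSC : (G.induce (S ∩ C)).Colorable n := by
      rw [← chromaticNumber_le_iff_colorable, hC _ Set.inter_subset_right]
      exact_mod_cast (G.induceHomOfLE Set.inter_subset_left).cliqueNum_le
    exact hSC.of_hom (induceHom (t := S ∩ C) (Embedding.induce S).toHom fun v hv => ⟨v.2, hv⟩)
  have hcol : (G.induce S).Colorable n :=
    Colorable.of_isClique_inter (A := Subtype.val ⁻¹' A) (B := Subtype.val ⁻¹' B)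
      (by rw [← Set.preimage_union, hAB, Set.preimage_univ])
      (fun u hu v hv huv => hK hu hv (Subtype.val_injective.ne huv)) (fun _ _ huv => hedge huv)
      (hside hA) (hside hB)
  exact le_antisymm hcol.chromaticNumber_le cliqueNum_le_chromaticNumber

end Perfect

section Embedding

variable {V : Type*} {G : SimpleGraph V} (E : PlaneEmbedding G) {W : Set V}

theorem pos_notMem_drawing {v : V} (hv : v ∉ W) : E.pos v ∉ drawing E W := by
  rintro (⟨w, hw, hwv⟩ | hvD)
  · exact hv (E.inj hwv ▸ hw)
  simp only [Set.mem_iUnion] at hvD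
  obtain ⟨a, ha, b, hb, hab, hvab⟩ := hvD
  rw [← insert_endpoints_openSegment] at hvab
  rcases hvab with hva | hvb | hvab
  · exact hv (E.inj hva ▸ ha)
  · exact hv (E.inj hvb ▸ hb)
  · exact E.vertex_not_on_edge hab hvab

theorem segment_subset_compl_drawing {u v : V} (huv : G.Adj u v) (hu : u ∉ W) (hv : v ∉ W) :
    segment ℝ (E.pos u) (E.pos v) ⊆ (drawing E W)ᶜ := by
  intro p hp hpD
  rw [← insert_endpoints_openSegment] at hp
  rcases hp with rfl | rfl | hp
  · exact pos_notMem_drawing E hu hpD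
  · exact pos_notMem_drawing E hv hpD
  rcases hpD with ⟨w, -, rfl⟩ | hpD
  · exact E.vertex_not_on_edge huv hp
  simp only [Set.mem_iUnion] at hpD
  obtain ⟨a, ha, b, hb, hab, hpab⟩ := hpD
  rw [← insert_endpoints_openSegment] at hpab
  rcases hpab with rfl | rfl | hpab
  · exact E.vertex_not_on_edge huv hp
  · exact E.vertex_not_on_edge huv hp
  · obtain ⟨rfl, -⟩ | ⟨rfl, -⟩ := Sym2.eq_iff.mp (E.edges_disjoint huv hab p hp hpab)
    exacts [hu ha, hu hb]

theorem not_adj_of_mem_intVerts_of_mem_extVerts {u v : V} (hu : u ∈ intVerts E W)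
    (hv : v ∈ extVerts E W) : ¬ G.Adj u v := by
  intro huv
  have hsame : connectedComponentIn (drawing E W)ᶜ (E.pos u) =
      connectedComponentIn (drawing E W)ᶜ (E.pos v) :=
    connectedComponentIn_eq <| (convex_segment _ _).isPreconnected.subset_connectedComponentIn
      (left_mem_segment ℝ _ _) (segment_subset_compl_drawing E huv hu.1 hv.1)
      (right_mem_segment ℝ _ _)
  exact hv.2.2 (hsame ▸ hu.2.2)

theorem mem_or_mem_intVerts_or_mem_extVerts (v : V) :
    v ∈ W ∨ v ∈ intVerts E W ∨ v ∈ extVerts E W := by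
  by_cases hv : v ∈ W
  · exact Or.inl hv
  · exact Or.inr <| (em _).imp (fun hb => ⟨hv, pos_notMem_drawing E hv, hb⟩)
      (fun hb => ⟨hv, pos_notMem_drawing E hv, hb⟩)

theorem intVerts_union_union_extVerts_union_eq_univ :
    (intVerts E W ∪ W) ∪ (extVerts E W ∪ W) = Set.univ := by
  refine Set.eq_univ_of_forall fun v => ?_
  rcases mem_or_mem_intVerts_or_mem_extVerts E (W := W) v with hv | hv | hv <;> simp [hv]

theorem intVerts_union_inter_extVerts_union_eq :
    (intVerts E W ∪ W) ∩ (extVerts E W ∪ W) = W := by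
  refine Set.Subset.antisymm ?_ fun v hv => ⟨Or.inr hv, Or.inr hv⟩
  rintro v ⟨hvi | hvW, hve | hvW'⟩
  exacts [absurd hvi.2.2 hve.2.2, hvW', hvW, hvW]

theorem adj_mem_intVerts_union_or_mem_extVerts_union {u v : V} (huv : G.Adj u v) :
    u ∈ intVerts E W ∪ W ∧ v ∈ intVerts E W ∪ W ∨
      u ∈ extVerts E W ∪ W ∧ v ∈ extVerts E W ∪ W := by
  have h₁ := fun hu hv => not_adj_of_mem_intVerts_of_mem_extVerts E (W := W) hu hv huv
  have h₂ := fun hv hu => not_adj_of_mem_intVerts_of_mem_extVerts E (W := W) hv hu huv.symm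
  simp only [Set.mem_union]
  rcases mem_or_mem_intVerts_or_mem_extVerts E (W := W) u with hu | hu | hu <;>
    rcases mem_or_mem_intVerts_or_mem_extVerts E (W := W) v with hv | hv | hv <;> tauto

end Embedding

end PlanePerfect

theorem separating_triangle_perfect_general {V : Type*} [Fintype V] (G : SimpleGraph V)
    (E : PlaneEmbedding G) (x y z : V)
    (hsep : SepTriOn E Set.univ x y z) :
    IsPerfect G ↔
      IsPerfect (G.induce (intVerts E {x, y, z} ∪ {x, y, z})) ∧
      IsPerfect (G.induce (extVerts E {x, y, z} ∪ {x, y, z})) := by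
  obtain ⟨-, -, -, hxy, hyz, hxz, -⟩ := hsep
  refine isPerfect_iff_of_isClique_inter (intVerts_union_union_extVerts_union_eq_univ E) ?_
    (fun _ _ => adj_mem_intVerts_union_or_mem_extVerts_union E)
  rw [intVerts_union_inter_extVerts_union_eq]
  simp [SimpleGraph.isClique_insert, hxy, hyz, hxz]

/-- A separating triangle of a plane near-triangulation splits it into two induced
subgraphs whose perfectness is equivalent to that of the whole graph. -/
theorem separating_triangle_perfect {V : Type*} [Fintype V] (G : SimpleGraph V)
    (E : PlaneEmbedding G) (hNT : NearTriOn E Set.univ) (x y z : V)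
    (hsep : SepTriOn E Set.univ x y z) :
    IsPerfect G ↔
      IsPerfect (G.induce (intVerts E {x, y, z} ∪ {x, y, z})) ∧
      IsPerfect (G.induce (extVerts E {x, y, z} ∪ {x, y, z})) :=
  separating_triangle_perfect_general G E x y z hsep
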